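/- Let S → ℙ¹ be a minimal ruled surface with a negative section E and a positive section C disjoint from E, and let F₁, F₂, F₃, F₄ be distinct fibers. Then C ∼_ℝ C + (F₁ − F₂) + √2·(F₃ − F₄), and for every real m > 0, h^0(S, O_S(⌊mC + m(F₁−F₂) + m√2(F₃−F₄)⌋)) < h^0(S, O_S(mC)). -/

import Mathlib

/-- An abstract model of the divisor theory of a proper normal algebraic variety
over a field `k`.  `K` is the function field, `Prime` is the set of prime (Weil)
divisors, and `ord Γ f` is the order of vanishing of the rational function `f`
along the prime divisor `Γ`. -/
structure NormalProperVariety (k : Type) [Field k] where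
  /-- The function field `K(X)`. -/
  K : Type
  [fieldK : Field K]
  [algK : Algebra k K]
  /-- The set of prime (Weil) divisors on `X`. -/
  Prime : Type
  /-- `ord Γ f` is the order of vanishing of `f` along `Γ`. -/
  ord : Prime → K → ℤ
  ord_mul : ∀ (Γ : Prime) {f g : K}, f ≠ 0 → g ≠ 0 →
      ord Γ (f * g) = ord Γ f + ord Γ g
  ord_add : ∀ (Γ : Prime) {f g : K}, f ≠ 0 → g ≠ 0 → f + g ≠ 0 →
      min (ord Γ f) (ord Γ g) ≤ ord Γ (f + g)
  ord_const : ∀ (Γ : Prime) (c : k), c ≠ 0 → ord Γ (algebraMap k K c) = 0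
  finite_ord : ∀ {f : K}, f ≠ 0 → {Γ : Prime | ord Γ f ≠ 0}.Finite

attribute [instance] NormalProperVariety.fieldK NormalProperVariety.algK

namespace NormalProperVariety

variable {k : Type} [Field k] (X : NormalProperVariety k)

open Classical

/-- ℝ-divisors on `X`: finite formal `ℝ`-linear combinations of prime divisors. -/
abbrev Div : Type := X.Prime →₀ ℝ

/-- The divisor `div(f)` of a rational function (by convention `0` for `f = 0`). -/
noncomputable def divOf (f : X.K) : X.Div :=
  if hf : f = 0 then 0
  else Finsupp.ofSupportFinite (fun Γ => (X.ord Γ f : ℝ))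
    (Set.Finite.subset (X.finite_ord hf) (by
      intro Γ hΓ
      simp only [Function.mem_support, ne_eq, Int.cast_eq_zero] at hΓ
      exact hΓ))

/-- The set of principal divisors `div(f)`, `f ∈ K(X)*`. -/
def Principal : Set X.Div := {D | ∃ f : X.K, f ≠ 0 ∧ D = X.divOf f}

/-- `ℝ`-linear equivalence: `D - D' = Σ aᵢ div(fᵢ)` with `aᵢ ∈ ℝ`. -/
def REquiv (D D' : X.Div) : Prop := D - D' ∈ Submodule.span ℝ X.Principal

/-- `ℚ`-linear equivalence: `D - D' = Σ aᵢ div(fᵢ)` with `aᵢ ∈ ℚ`. -/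
def QEquiv (D D' : X.Div) : Prop := D - D' ∈ Submodule.span ℚ X.Principal

/-- `ℤ`-linear equivalence: `D - D' = div(f)`. -/
def ZEquiv (D D' : X.Div) : Prop := ∃ f : X.K, f ≠ 0 ∧ D - D' = X.divOf f

/-- `H⁰(X, 𝒪_X(D)) = H⁰(X, 𝒪_X(⌊D⌋))` as a subset of the function field, namely
`{f ∈ K(X)* : div(f) + D ≥ 0} ∪ {0}`.  (Since `ord` takes integer values,
replacing `D` by its round-down `⌊D⌋` does not change this set.) -/
def H0 (D : X.Div) : Set X.K :=
  {f : X.K | f = 0 ∨ ∀ Γ : X.Prime, 0 ≤ (X.ord Γ f : ℝ) + D Γ}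

/-- `h⁰(D) = dim_k H⁰(X, 𝒪_X(⌊D⌋))`. -/
noncomputable def h0 (D : X.Div) : ℕ := Set.finrank k (X.H0 D)

/-- The volume `vol(D) = limsup_{m → ∞} h⁰(mD) / (mⁿ / n!)`, where `n = dim X`. -/
noncomputable def vol (n : ℕ) (D : X.Div) : ℝ :=
  Filter.limsup (fun m : ℝ => (X.h0 (m • D) : ℝ) * (n.factorial : ℝ) / m ^ n)
    Filter.atTop

/-- `D` is big iff `vol(D) > 0` (`n = dim X`). -/
def IsBig (n : ℕ) (D : X.Div) : Prop := 0 < X.vol n D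

/-- Nakayama's `σ_Γ(D) = inf { mult_Γ D' : D' ∼_ℝ D, D' ≥ 0 }`. -/
noncomputable def sigma (D : X.Div) (Γ : X.Prime) : ℝ :=
  sInf {t : ℝ | ∃ D' : X.Div, X.REquiv D' D ∧ 0 ≤ D' ∧ t = D' Γ}

/-- The negative part `N_σ(D) = Σ_Γ σ_Γ(D) · Γ` of the divisorial Zariski
decomposition (by convention `0` in the degenerate case where infinitely many of
the `σ_Γ(D)` are nonzero). -/
noncomputable def Nsigma (D : X.Div) : X.Div :=
  if h : (Function.support fun Γ => X.sigma D Γ).Finite then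
    Finsupp.ofSupportFinite _ h
  else 0

/-- The positive part `P_σ(D) = D - N_σ(D)`. -/
noncomputable def Psigma (D : X.Div) : X.Div := D - X.Nsigma D

/-- A big ℝ-divisor is movable if `N_σ(D) = 0`. -/
def Movable (D : X.Div) : Prop := X.Nsigma D = 0

end NormalProperVariety

/-!
Write `div g = F₁ - F₂` and `div h = F₃ - F₄`. Multiplication by `g ^ ⌊m⌋ * h ^ ⌊m√2⌋` identifies
`H⁰(mC + m(F₁ - F₂) + m√2(F₃ - F₄))` with `H⁰(mC + {m}(F₁ - F₂) + {m√2}(F₃ - F₄))`. Rounding down,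
the coefficients `{m}` and `{m√2}` vanish while `-{m}` and `-{m√2}` become `-1` as soon as they are
nonzero, so this space sits inside `H⁰(mC)`. Since `m` and `m√2` are not both integers, at least
one of `F₂`, `F₄` really is subtracted, and the constants are lost.
-/

lemma Irrational.fract_ne_zero_or_fract_mul_ne_zero {α : ℝ} (hα : Irrational α) {m : ℝ} (hm : m ≠ 0) :
    Int.fract m ≠ 0 ∨ Int.fract (m * α) ≠ 0 := by
  refine or_iff_not_imp_left.2 fun h => ?_
  obtain ⟨n, rfl⟩ := Int.fract_eq_zero_iff.1 (not_not.1 h)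
  rintro hn
  obtain ⟨z, hz⟩ := Int.fract_eq_zero_iff.1 hn
  exact (hα.intCast_mul (by rintro rfl; simp at hm)).ne_int z hz.symm

namespace NormalProperVariety

variable {k : Type} [Field k] (X : NormalProperVariety k)

lemma ord_one (Γ : X.Prime) : X.ord Γ 1 = 0 := by
  simpa using X.ord_const Γ 1 one_ne_zero

lemma divOf_apply {f : X.K} (hf : f ≠ 0) (Γ : X.Prime) : X.divOf f Γ = X.ord Γ f := by
  rw [divOf, dif_neg hf]
  rfl

lemma divOf_mul {f g : X.K} (hf : f ≠ 0) (hg : g ≠ 0) :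
    X.divOf (f * g) = X.divOf f + X.divOf g := by
  ext Γ
  simp only [Finsupp.add_apply, divOf_apply X (mul_ne_zero hf hg), divOf_apply X hf,
    divOf_apply X hg, X.ord_mul Γ hf hg, Int.cast_add]

lemma divOf_one : X.divOf 1 = 0 := by
  ext Γ
  simp [divOf_apply X one_ne_zero, ord_one]

lemma divOf_inv {f : X.K} (hf : f ≠ 0) : X.divOf f⁻¹ = -X.divOf f := by
  have h := X.divOf_mul hf (inv_ne_zero hf)
  rw [mul_inv_cancel₀ hf, divOf_one] at h
  exact eq_neg_of_add_eq_zero_right h.symm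

lemma divOf_pow {f : X.K} (hf : f ≠ 0) (n : ℕ) : X.divOf (f ^ n) = (n : ℝ) • X.divOf f := by
  induction n with
  | zero => simp [divOf_one]
  | succ n ih => rw [pow_succ, divOf_mul X (pow_ne_zero _ hf) hf, ih]; module

lemma divOf_zpow {f : X.K} (hf : f ≠ 0) (n : ℤ) : X.divOf (f ^ n) = (n : ℝ) • X.divOf f := by
  cases n with
  | ofNat n => simpa using X.divOf_pow hf n
  | negSucc n =>
    rw [zpow_negSucc, divOf_inv X (pow_ne_zero _ hf), divOf_pow X hf, Int.cast_negSucc, neg_smul]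

section

variable {X}

lemma ZEquiv.sub_mem_span {D D' : X.Div} (h : X.ZEquiv D D') :
    D - D' ∈ Submodule.span ℝ X.Principal := by
  obtain ⟨f, hf, hD⟩ := h
  exact hD ▸ Submodule.subset_span ⟨f, hf, rfl⟩

lemma REquiv_add_of_mem_span (D : X.Div) {P : X.Div} (hP : P ∈ Submodule.span ℝ X.Principal) :
    X.REquiv D (D + P) := by
  rw [REquiv, sub_add_cancel_left]
  exact neg_mem hP

lemma ZEquiv.add_smul_add_smul_fract {A A' B B' : X.Div} (hA : X.ZEquiv A A') (hB : X.ZEquiv B B')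
    (D : X.Div) (s t : ℝ) :
    X.ZEquiv (D + s • (A - A') + t • (B - B'))
      (D + Int.fract s • (A - A') + Int.fract t • (B - B')) := by
  obtain ⟨g, hg0, hg⟩ := hA
  obtain ⟨h, hh0, hh⟩ := hB
  refine ⟨g ^ ⌊s⌋ * h ^ ⌊t⌋, mul_ne_zero (zpow_ne_zero _ hg0) (zpow_ne_zero _ hh0), ?_⟩
  rw [X.divOf_mul (zpow_ne_zero _ hg0) (zpow_ne_zero _ hh0), X.divOf_zpow hg0, X.divOf_zpow hh0,
    ← hg, ← hh, ← Int.self_sub_floor, ← Int.self_sub_floor]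
  module

lemma add_mem_H0 {D : X.Div} {f g : X.K} (hf : f ∈ X.H0 D) (hg : g ∈ X.H0 D) :
    f + g ∈ X.H0 D := by
  rcases eq_or_ne f 0 with rfl | hf0
  · simpa using hg
  rcases eq_or_ne g 0 with rfl | hg0
  · simpa using hf
  rcases eq_or_ne (f + g) 0 with hfg | hfg
  · exact Or.inl hfg
  refine Or.inr fun Γ => ?_
  have hmin : min (X.ord Γ f : ℝ) (X.ord Γ g) ≤ X.ord Γ (f + g) := by
    exact_mod_cast X.ord_add Γ hf0 hg0 hfg
  have h := le_min (hf.resolve_left hf0 Γ) (hg.resolve_left hg0 Γ)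
  rw [min_add_add_right] at h
  linarith

lemma smul_mem_H0 {D : X.Div} (r : k) {f : X.K} (hf : f ∈ X.H0 D) : r • f ∈ X.H0 D := by
  rcases eq_or_ne r 0 with rfl | hr
  · exact Or.inl (zero_smul k f)
  rcases eq_or_ne f 0 with rfl | hf0
  · exact Or.inl (smul_zero r)
  refine Or.inr fun Γ => ?_
  rw [Algebra.smul_def, X.ord_mul Γ ((map_ne_zero _).2 hr) hf0, X.ord_const Γ r hr, zero_add]
  exact hf.resolve_left hf0 Γ

lemma one_mem_H0_iff {D : X.Div} : (1 : X.K) ∈ X.H0 D ↔ 0 ≤ D := by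
  simp [H0, ord_one, Finsupp.le_def]

lemma H0_subset_H0_of_floor_le {D D' : X.Div} (h : ∀ Γ, ⌊D Γ⌋ ≤ ⌊D' Γ⌋) :
    X.H0 D ⊆ X.H0 D' := by
  refine fun f hf => hf.imp id fun hf Γ => ?_
  have hD : -X.ord Γ f ≤ ⌊D Γ⌋ := Int.le_floor.2 (by push_cast; linarith [hf Γ])
  have hD' := Int.le_floor.1 (hD.trans (h Γ))
  push_cast at hD'
  linarith

lemma H0_add_smul_sub_subset {D : X.Div} {Γ₁ : X.Prime} {n : ℤ} (hn : D Γ₁ = n) (Γ₂ : X.Prime)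
    {t : ℝ} (ht₀ : 0 ≤ t) (ht₁ : t < 1) :
    X.H0 (D + t • (Finsupp.single Γ₁ 1 - Finsupp.single Γ₂ 1)) ⊆ X.H0 D := by
  classical
  refine H0_subset_H0_of_floor_le fun Γ => ?_
  by_cases h₂ : Γ₂ = Γ
  · subst h₂
    refine Int.floor_le_floor ?_
    simp only [Finsupp.add_apply, Finsupp.smul_apply, Finsupp.sub_apply, Finsupp.single_apply,
      if_pos, smul_eq_mul]
    split_ifs <;> linarith
  · by_cases h₁ : Γ₁ = Γ
    · subst h₁
      simp [h₂, hn, Int.floor_intCast_add, Int.floor_eq_zero_iff.2 ⟨ht₀, ht₁⟩]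
    · simp [h₁, h₂]

end

def H0Submodule (D : X.Div) : Submodule k X.K where
  carrier := X.H0 D
  zero_mem' := Or.inl rfl
  add_mem' := add_mem_H0
  smul_mem' := smul_mem_H0

lemma h0_eq_finrank (D : X.Div) : X.h0 D = Module.finrank k (X.H0Submodule D) := by
  rw [h0, Set.finrank, show X.H0 D = X.H0Submodule D from rfl, Submodule.span_eq]

lemma h0_lt_h0_of_ssubset {D D' : X.Div}
    (hfin : FiniteDimensional k (Submodule.span k (X.H0 D'))) (h : X.H0 D ⊂ X.H0 D') :
    X.h0 D < X.h0 D' := by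
  rw [show X.H0 D' = X.H0Submodule D' from rfl, Submodule.span_eq] at hfin
  rw [h0_eq_finrank, h0_eq_finrank]
  exact Submodule.finrank_lt_finrank_of_lt (SetLike.coe_ssubset_coe.1 h)

lemma map_mulRight_H0Submodule {w : X.K} (hw : w ≠ 0) (D : X.Div) :
    (X.H0Submodule D).map (LinearMap.mulRight k w) = X.H0Submodule (D - X.divOf w) := by
  have key : ∀ f, f * w ∈ X.H0 (D - X.divOf w) ↔ f ∈ X.H0 D := fun f => by
    rcases eq_or_ne f 0 with rfl | hf0
    · simp [H0]
    simp only [H0, Set.mem_ofPred_eq, mul_eq_zero, hw, hf0, or_false, false_or, X.ord_mul _ hf0 hw,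
      Finsupp.sub_apply, divOf_apply X hw, Int.cast_add, add_add_sub_cancel]
  ext f
  refine ⟨?_, fun hf => ⟨f * w⁻¹, (key _).1 ?_, inv_mul_cancel_right₀ hw f⟩⟩
  · rintro ⟨g, hg, rfl⟩
    exact (key g).2 hg
  · rwa [inv_mul_cancel_right₀ hw]

lemma h0_eq_of_ZEquiv {D D' : X.Div} (h : X.ZEquiv D D') : X.h0 D = X.h0 D' := by
  obtain ⟨w, hw, hD⟩ := h
  rw [show D' = D - X.divOf w by rw [← hD, sub_sub_cancel], h0_eq_finrank, h0_eq_finrank,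
    ← map_mulRight_H0Submodule X hw]
  exact ((X.H0Submodule D).equivMapOfInjective _ (mul_left_injective₀ hw)).finrank_eq

end NormalProperVariety

theorem ruled_surface_hilbert_function_general {k : Type} [Field k]
    (S : NormalProperVariety k)
    (hfin : ∀ D' : S.Div, FiniteDimensional k (Submodule.span k (S.H0 D')))
    (e c f₁ f₂ f₃ f₄ : S.Prime)
    (hdist : List.Pairwise (· ≠ ·) [e, c, f₁, f₂, f₃, f₄])
    (hfiblin : ∀ f ∈ [f₁, f₂, f₃, f₄], ∀ f' ∈ [f₁, f₂, f₃, f₄],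
      S.ZEquiv (Finsupp.single f 1) (Finsupp.single f' 1)) :
    S.REquiv (Finsupp.single c 1)
      (Finsupp.single c 1 + (Finsupp.single f₁ 1 - Finsupp.single f₂ 1)
        + Real.sqrt 2 • (Finsupp.single f₃ 1 - Finsupp.single f₄ 1)) ∧
    ∀ m : ℝ, 0 < m →
      S.h0 (m • Finsupp.single c 1 + m • (Finsupp.single f₁ 1 - Finsupp.single f₂ 1)
          + (m * Real.sqrt 2) • (Finsupp.single f₃ 1 - Finsupp.single f₄ 1))
        < S.h0 (m • Finsupp.single c 1) := by
  have hZ₁₂ := hfiblin f₁ (by simp) f₂ (by simp)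
  have hZ₃₄ := hfiblin f₃ (by simp) f₄ (by simp)
  refine ⟨?_, fun m hm => ?_⟩
  · rw [add_assoc]
    exact S.REquiv_add_of_mem_span _
      (add_mem hZ₁₂.sub_mem_span (Submodule.smul_mem _ _ hZ₃₄.sub_mem_span))
  simp only [ne_eq, List.pairwise_cons, List.mem_cons, List.not_mem_nil, or_false,
    forall_eq_or_imp, forall_eq, List.Pairwise.nil, and_true, IsEmpty.forall_iff] at hdist
  obtain ⟨-, ⟨hc₁, hc₂, hc₃, hc₄⟩, ⟨h₁₂, h₁₃, h₁₄⟩, ⟨h₂₃, h₂₄⟩, h₃₄⟩ := hdist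
  rw [S.h0_eq_of_ZEquiv (hZ₁₂.add_smul_add_smul_fract hZ₃₄ _ m (m * √2))]
  refine S.h0_lt_h0_of_ssubset (hfin _) ((Set.ssubset_iff_of_subset ?_).2 ⟨1, ?_, ?_⟩)
  · exact (S.H0_add_smul_sub_subset (n := 0) (by simp [hc₃, h₁₃, h₂₃]) f₄
      (Int.fract_nonneg _) (Int.fract_lt_one _)).trans
      (S.H0_add_smul_sub_subset (n := 0) (by simp [hc₁]) f₂
        (Int.fract_nonneg _) (Int.fract_lt_one _))
  · exact S.one_mem_H0_iff.2 (smul_nonneg hm.le (Finsupp.single_nonneg.2 zero_le_one))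
  · rw [S.one_mem_H0_iff, Finsupp.le_def, not_forall]
    rcases irrational_sqrt_two.fract_ne_zero_or_fract_mul_ne_zero hm.ne' with hfr | hfr
    · exact ⟨f₂, by simpa [Finsupp.single_apply, hc₂, h₁₂, h₂₃, h₂₄] using
        (Int.fract_nonneg m).lt_of_ne' hfr⟩
    · exact ⟨f₄, by simpa [Finsupp.single_apply, hc₄, h₁₄, h₂₄, h₃₄] using
        (Int.fract_nonneg (m * √2)).lt_of_ne' hfr⟩

/-- Let `S → ℙ¹` be a minimal ruled surface over an algebraically
closed field, with a negative section `e`, a positive section `c` disjoint from `e`,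
and distinct fibers `f₁, f₂, f₃, f₄`.  (The geometric situation is encoded through an
intersection pairing `inter` on ℝ-divisors that is invariant under linear
equivalence, together with the standard intersection numbers: `E² < 0`, `C² > 0`,
`C·E = 0`, `F·E = F·C = 1`, `F·F' = 0` for fibers, and the fact that any two fibers
are linearly equivalent.)  Then `C ∼_ℝ C + (F₁ - F₂) + √2·(F₃ - F₄)`, yet
`h⁰(⌊mC + m(F₁ - F₂) + m√2(F₃ - F₄)⌋) < h⁰(mC)` for every real `m > 0`. -/
theorem ruled_surface_hilbert_function {k : Type} [Field k] [IsAlgClosed k]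
    (S : NormalProperVariety k)
    (hfin : ∀ D' : S.Div, FiniteDimensional k (Submodule.span k (S.H0 D')))
    (e c f₁ f₂ f₃ f₄ : S.Prime)
    (hdist : List.Pairwise (· ≠ ·) [e, c, f₁, f₂, f₃, f₄])
    (inter : S.Div →ₗ[ℝ] S.Div →ₗ[ℝ] ℝ)
    (hinv : ∀ D D' : S.Div, S.ZEquiv D D' → ∀ G : S.Div, inter D G = inter D' G)
    (hEneg : inter (Finsupp.single e 1) (Finsupp.single e 1) < 0)
    (hCpos : 0 < inter (Finsupp.single c 1) (Finsupp.single c 1))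
    (hdisj : inter (Finsupp.single c 1) (Finsupp.single e 1) = 0)
    (hfibE : ∀ f ∈ [f₁, f₂, f₃, f₄], inter (Finsupp.single f 1) (Finsupp.single e 1) = 1)
    (hfibC : ∀ f ∈ [f₁, f₂, f₃, f₄], inter (Finsupp.single f 1) (Finsupp.single c 1) = 1)
    (hfibfib : ∀ f ∈ [f₁, f₂, f₃, f₄], ∀ f' ∈ [f₁, f₂, f₃, f₄],
      inter (Finsupp.single f 1) (Finsupp.single f' 1) = 0)
    (hfiblin : ∀ f ∈ [f₁, f₂, f₃, f₄], ∀ f' ∈ [f₁, f₂, f₃, f₄],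
      S.ZEquiv (Finsupp.single f 1) (Finsupp.single f' 1)) :
    S.REquiv (Finsupp.single c 1)
      (Finsupp.single c 1 + (Finsupp.single f₁ 1 - Finsupp.single f₂ 1)
        + Real.sqrt 2 • (Finsupp.single f₃ 1 - Finsupp.single f₄ 1)) ∧
    ∀ m : ℝ, 0 < m →
      S.h0 (m • Finsupp.single c 1 + m • (Finsupp.single f₁ 1 - Finsupp.single f₂ 1)
          + (m * Real.sqrt 2) • (Finsupp.single f₃ 1 - Finsupp.single f₄ 1))
        < S.h0 (m • Finsupp.single c 1) :=
  ruled_surface_hilbert_function_general S hfin e c f₁ f₂ f₃ f₄ hdist hfiblin
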